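/- Let n ≥ 1 and let K_n be the complete simple graph on {1, …, n}. The map sending a realizable edge {0,1}-labelling α of K_n to the binary relation '(i = j) or α({i,j}) = 1' on {1, …, n} is a bijection between the set of realizable edge {0,1}-labellings of K_n and the set of equivalence relations on {1, …, n}. Consequently, the number of vertices of the classical polytope C_{K_n} equals the number of partitions of an n-element set (the n-th Bell number). -/

import Mathlib

/-!
The relation of a realizable labelling `ε_λ` is the kernel of `λ`, hence an equivalence;
conversely an equivalence relation `R` is the relation of `ε_π` for the quotient map `π`, and
a labelling of `K_n` is determined by its relation since every pair of distinct vertices is an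
edge. The count then follows from the correspondence between equivalence relations and
partitions.
-/

open SimpleGraph

/-- The element of `G.edgeSet` corresponding to an adjacent pair of vertices. -/
def edgeMk {V : Type*} (G : SimpleGraph V) {v w : V} (h : G.Adj v w) : G.edgeSet :=
  ⟨s(v, w), (SimpleGraph.mem_edgeSet G).mpr h⟩

/-- `α` is the equality labelling of the vertex labelling `lam` (label 1 ↔ `True`). -/
def IsEqualityLabelling {V : Type*} (G : SimpleGraph V) {Λ : Type*} (lam : V → Λ)
    (α : G.edgeSet → Prop) : Prop :=
  ∀ v w (h : G.Adj v w), (α (edgeMk G h) ↔ lam v = lam w)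

/-- `α` is realizable: it is the equality labelling of some vertex labelling into some set. -/
def Realizable {V : Type*} (G : SimpleGraph V) (α : G.edgeSet → Prop) : Prop :=
  ∃ (Λ : Type) (lam : V → Λ), IsEqualityLabelling G lam α

/-- The complete graph `K_n` on `{1, …, n}`, modelled as `Fin n`. -/
abbrev Kgraph (n : ℕ) : SimpleGraph (Fin n) := ⊤

/-- The relation associated to an edge labelling `α` of `K_n`:
`i ∼ j` iff `i = j` or `α({i,j}) = 1`. -/
def relOf (n : ℕ) (α : (Kgraph n).edgeSet → Prop) : Fin n → Fin n → Prop :=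
  fun i j => i = j ∨ ∃ h : (Kgraph n).Adj i j, α (edgeMk (Kgraph n) h)

section EqualityLabelling

variable {V : Type*} (G : SimpleGraph V)

theorem edgeLabelling_ext {α β : G.edgeSet → Prop}
    (h : ∀ v w (hvw : G.Adj v w), α (edgeMk G hvw) ↔ β (edgeMk G hvw)) : α = β := by
  funext ⟨e, he⟩
  induction e using Sym2.ind with
  | _ v w => exact propext (h v w ((mem_edgeSet G).1 he))

def eqLabelling {Λ : Type*} (lam : V → Λ) : G.edgeSet → Prop :=
  fun e => Sym2.lift ⟨fun v w => lam v = lam w, fun _ _ => propext eq_comm⟩ e.1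

theorem isEqualityLabelling_eqLabelling {Λ : Type*} (lam : V → Λ) :
    IsEqualityLabelling G lam (eqLabelling G lam) :=
  fun _ _ _ => Iff.rfl

theorem realizable_eqLabelling {Λ : Type} (lam : V → Λ) : Realizable G (eqLabelling G lam) :=
  ⟨Λ, lam, isEqualityLabelling_eqLabelling G lam⟩

end EqualityLabelling

section RelOf

variable {n : ℕ}

theorem relOf_iff_of_ne {α : (Kgraph n).edgeSet → Prop} {i j : Fin n} (hij : i ≠ j) :
    relOf n α i j ↔ α (edgeMk (Kgraph n) hij) := by
  simp [relOf, hij]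

theorem relOf_eq_of_isEqualityLabelling {α : (Kgraph n).edgeSet → Prop} {Λ : Type*}
    {lam : Fin n → Λ} (hα : IsEqualityLabelling (Kgraph n) lam α) :
    relOf n α = fun i j => lam i = lam j := by
  funext i j
  by_cases hij : i = j
  · simp [relOf, hij]
  · rw [relOf_iff_of_ne hij, hα i j hij]

theorem equivalence_relOf_of_realizable {α : (Kgraph n).edgeSet → Prop}
    (hα : Realizable (Kgraph n) α) : Equivalence (relOf n α) := by
  obtain ⟨Λ, lam, hlam⟩ := hα
  rw [relOf_eq_of_isEqualityLabelling hlam]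
  exact (Setoid.ker lam).iseqv

theorem relOf_injective : Function.Injective (relOf n) := fun α β h =>
  edgeLabelling_ext _ fun _ _ hij => by
    rw [← relOf_iff_of_ne (α := α) hij, ← relOf_iff_of_ne (α := β) hij, h]

theorem bijOn_relOf :
    Set.BijOn (relOf n) {α | Realizable (Kgraph n) α}
      {R : Fin n → Fin n → Prop | Equivalence R} := by
  refine ⟨fun _ => equivalence_relOf_of_realizable, relOf_injective.injOn, ?_⟩
  intro R (hR : Equivalence R)
  let s : Setoid (Fin n) := ⟨R, hR⟩
  refine ⟨eqLabelling _ (Quotient.mk s), realizable_eqLabelling _ _, ?_⟩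
  rw [relOf_eq_of_isEqualityLabelling (isEqualityLabelling_eqLabelling _ _)]
  funext i j
  exact propext Quotient.eq

end RelOf

theorem ncard_setOf_equivalence (α : Type*) :
    {R : α → α → Prop | Equivalence R}.ncard = {P : Set (Set α) | Setoid.IsPartition P}.ncard := by
  let toSetoid : {R : α → α → Prop | Equivalence R} ≃ Setoid α :=
    ⟨fun R => ⟨R.1, R.2⟩, fun s => ⟨s.r, s.iseqv⟩, fun _ => rfl, fun _ => rfl⟩
  exact Set.ncard_congr' (toSetoid.trans (Setoid.Partition.orderIso α).toEquiv)

theorem stmt14_general (n : ℕ) :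
    Set.BijOn (relOf n) {α | Realizable (Kgraph n) α} {R : Fin n → Fin n → Prop | Equivalence R} ∧
    {α : (Kgraph n).edgeSet → Prop | Realizable (Kgraph n) α}.ncard =
      {P : Set (Set (Fin n)) | Setoid.IsPartition P}.ncard :=
  ⟨bijOn_relOf, bijOn_relOf.ncard_eq.trans (ncard_setOf_equivalence (Fin n))⟩

/-- The map `α ↦ relOf α` is a bijection from the realizable edge `{0,1}`-labellings of
`K_n` onto the equivalence relations on `{1, …, n}`; consequently, the number of vertices
of the classical polytope `C_{K_n}` (i.e. of realizable labellings) equals the number of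
partitions of an `n`-element set (the `n`-th Bell number). -/
theorem stmt14 (n : ℕ) (hn : 1 ≤ n) :
    Set.BijOn (relOf n) {α | Realizable (Kgraph n) α} {R : Fin n → Fin n → Prop | Equivalence R} ∧
    {α : (Kgraph n).edgeSet → Prop | Realizable (Kgraph n) α}.ncard =
      {P : Set (Set (Fin n)) | Setoid.IsPartition P}.ncard :=
  stmt14_general n
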